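/- arXiv:math/0307089 — 4 statements merged into one kernel-verified Lean document; each statement's English description precedes it below -/
import Mathlib

section
/- Let f(z) = z + z^e g(z) be a power series with g a power series with coefficients in O_p and e > 1. Then for every n ≥ 1 there exists a power series h_n with coefficients in O_p such that f^n(z) = z + n z^e g(z) + z^{2e-1} h_n(z). -/
/-- Composition `f ∘ g` of formal power series (intended for `g` with zero
constant term). -/
noncomputable def PowerSeries.compose {R : Type*} [CommRing R] (f g : PowerSeries R) :
    PowerSeries R :=
  PowerSeries.mk fun n =>
    PowerSeries.coeff n
      (∑ k ∈ Finset.range (n + 1), PowerSeries.C (PowerSeries.coeff k f) * g ^ k)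

/-!
Write `F m` for the `m`-th iterate of `f = X + X^e g` applied to `X`, and argue by induction
that `F m ≡ X + m X^e g (mod X^(2e-1))`. Then `X^e ∣ F m - X`, so `(F m)^e ≡ X^e` modulo
`X^e · X^(e-1)` and `g ∘ F m ≡ g (mod X^e)`; plugging these into
`F (m+1) = F m + (F m)^e (g ∘ F m)` gives the congruence for `m + 1`. The quotient by
`X^(2e-1)` has coefficients in `O = {x | ‖x‖ ≤ 1}` because `O⟦X⟧` is a subring closed under
composition.
-/

open PowerSeries Finset

theorem mul_pow_dvd_pow_sub_pow {R : Type*} [CommRing R] {a b x y : R}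
    (hx : a ∣ x) (hy : a ∣ y) (hxy : b ∣ x - y) (k : ℕ) :
    b * a ^ (k - 1) ∣ x ^ k - y ^ k := by
  rw [← geom_sum₂_mul, mul_comm b]
  refine mul_dvd_mul (dvd_sum fun i hi => ?_) hxy
  rw [← pow_mul_pow_sub a (Nat.le_sub_one_of_lt (mem_range.mp hi))]
  exact mul_dvd_mul (pow_dvd_pow_of_dvd hx i) (pow_dvd_pow_of_dvd hy _)

namespace PowerSeries

variable {R : Type*} [CommRing R]

theorem compose_eq_subst {w : R⟦X⟧} (hw : constantCoeff w = 0) (f : R⟦X⟧) :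
    f.compose w = f.subst w := by
  ext n
  rw [coeff_subst' (HasSubst.of_constantCoeff_zero' hw), compose, coeff_mk, map_sum,
    finsum_eq_sum_of_support_subset (s := range (n + 1))]
  · simp only [coeff_C_mul, smul_eq_mul]
  · intro d hd
    by_contra hdn
    refine hd ?_
    have hX : (X : R⟦X⟧) ^ d ∣ w ^ d := pow_dvd_pow_of_dvd (X_dvd_iff.mpr hw) d
    simp only [smul_eq_mul, X_pow_dvd_iff.mp hX n (by simpa using hdn), mul_zero]

theorem compose_X (f : R⟦X⟧) : f.compose X = f := by
  rw [compose_eq_subst constantCoeff_X, X_subst]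

theorem X_add_X_pow_mul_compose {w : R⟦X⟧} (hw : constantCoeff w = 0) (e : ℕ) (g : R⟦X⟧) :
    (X + X ^ e * g).compose w = w + w ^ e * g.compose w := by
  have hs := HasSubst.of_constantCoeff_zero' hw
  simp only [compose_eq_subst hw, subst_add hs, subst_mul hs, subst_pow hs, subst_X hs]

theorem X_pow_dvd_compose_sub_compose {m : ℕ} {w₁ w₂ : R⟦X⟧} (h : X ^ m ∣ w₁ - w₂)
    (g : R⟦X⟧) : X ^ m ∣ g.compose w₁ - g.compose w₂ := by
  refine X_pow_dvd_iff.mpr fun d hd => ?_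
  rw [map_sub, compose, compose, coeff_mk, coeff_mk, ← map_sub, ← sum_sub_distrib]
  refine X_pow_dvd_iff.mp (dvd_sum fun k _ => ?_) d hd
  rw [← mul_sub]
  exact (h.trans (sub_dvd_pow_sub_pow w₁ w₂ k)).mul_left _

theorem map_compose {S : Type*} [CommRing S] (φ : R →+* S) (f w : R⟦X⟧) :
    (f.compose w).map φ = (f.map φ).compose (w.map φ) := by
  ext n
  simp [compose, coeff_map, map_sum, ← map_pow]

end PowerSeries

section Integral

variable (K : Type*) [NormedField K] [IsUltrametricDist K]

noncomputable def integralPowerSeries : Subring K⟦X⟧ :=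
  (PowerSeries.map (NormedField.valuation (K := K)).integer.subtype).range

variable {K}

theorem mem_integralPowerSeries {f : K⟦X⟧} :
    f ∈ integralPowerSeries K ↔ ∀ i, ‖coeff i f‖ ≤ 1 := by
  constructor
  · rintro ⟨f', rfl⟩ i
    simpa [coeff_map, ← NNReal.coe_le_one] using
      (Valuation.mem_integer_iff _ _).mp (f'.coeff i).2
  · intro hf
    refine ⟨mk fun i => ⟨coeff i f, ?_⟩, ?_⟩
    · simpa [Valuation.mem_integer_iff, ← NNReal.coe_le_one] using hf i
    · ext i
      simp [coeff_map]

theorem X_mem_integralPowerSeries : X ∈ integralPowerSeries K :=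
  ⟨X, map_X _⟩

theorem compose_mem_integralPowerSeries {f w : K⟦X⟧} (hf : f ∈ integralPowerSeries K)
    (hw : w ∈ integralPowerSeries K) : f.compose w ∈ integralPowerSeries K := by
  obtain ⟨f', rfl⟩ := hf
  obtain ⟨w', rfl⟩ := hw
  exact ⟨f'.compose w', map_compose _ f' w'⟩

theorem mem_integralPowerSeries_of_X_pow_mul_mem {k : ℕ} {q : K⟦X⟧}
    (h : X ^ k * q ∈ integralPowerSeries K) : q ∈ integralPowerSeries K := by
  rw [mem_integralPowerSeries] at h ⊢
  intro i
  simpa [coeff_X_pow_mul] using h (i + k)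

end Integral

section Iterate

variable {R : Type*} [CommRing R] {e : ℕ}

theorem X_pow_dvd_iterate_compose_sub (he : 1 ≤ e) (g : R⟦X⟧) (n : ℕ) :
    X ^ (2 * e - 1) ∣
      (fun w => (X + X ^ e * g).compose w)^[n] X - X - (n : R⟦X⟧) * (X ^ e * g) := by
  induction n with
  | zero => simp
  | succ m ih =>
    set w := (fun w => (X + X ^ e * g).compose w)^[m] X
    have h2e : (X : R⟦X⟧) ^ (2 * e - 1) = X ^ e * X ^ (e - 1) := by
      rw [← pow_add]; congr 1; omega
    have hXe : (X : R⟦X⟧) ^ e ∣ w - X := by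
      have : w - X = (w - X - (m : R⟦X⟧) * (X ^ e * g)) + (m : R⟦X⟧) * (X ^ e * g) := by ring
      rw [this]
      exact dvd_add ((pow_dvd_pow X (by omega)).trans ih)
        (dvd_mul_of_dvd_right (dvd_mul_right _ _) _)
    have hXw : (X : R⟦X⟧) ∣ w := by
      have : w = (w - X) + X := by ring
      rw [this]
      exact dvd_add ((dvd_pow_self X (by omega)).trans hXe) dvd_rfl
    have hpow : (X : R⟦X⟧) ^ (2 * e - 1) ∣ w ^ e - X ^ e := by
      rw [h2e]
      exact mul_pow_dvd_pow_sub_pow hXw dvd_rfl hXe e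
    have hg : (X : R⟦X⟧) ^ e ∣ g.compose w - g := by
      simpa [compose_X] using X_pow_dvd_compose_sub_compose hXe g
    rw [Function.iterate_succ_apply', X_add_X_pow_mul_compose (X_dvd_iff.mp hXw)]
    have hsplit : w + w ^ e * g.compose w - X - ((m + 1 : ℕ) : R⟦X⟧) * (X ^ e * g) =
        (w - X - (m : R⟦X⟧) * (X ^ e * g)) + (w ^ e - X ^ e) * g.compose w
          + X ^ e * (g.compose w - g) := by
      push_cast; ring
    rw [hsplit]
    refine dvd_add (dvd_add ih (hpow.mul_right _)) ?_
    rw [h2e]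
    exact mul_dvd_mul dvd_rfl ((pow_dvd_pow X (by omega)).trans hg)

end Iterate

theorem stmt1_general {K : Type*} [NormedField K] [IsUltrametricDist K]
    (e : ℕ) (he : 1 < e)
    (g : PowerSeries K) (hg : ∀ i, ‖PowerSeries.coeff i g‖ ≤ 1)
    (n : ℕ) :
    ∃ h : PowerSeries K, (∀ i, ‖PowerSeries.coeff i h‖ ≤ 1) ∧
      (fun w => (PowerSeries.X + PowerSeries.X ^ e * g).compose w)^[n] PowerSeries.X
        = PowerSeries.X + (n : PowerSeries K) * (PowerSeries.X ^ e * g)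
          + PowerSeries.X ^ (2 * e - 1) * h := by
  set O := integralPowerSeries K
  have hgO : g ∈ O := mem_integralPowerSeries.mpr hg
  have hfO : X + X ^ e * g ∈ O :=
    O.add_mem X_mem_integralPowerSeries (O.mul_mem (O.pow_mem X_mem_integralPowerSeries e) hgO)
  have hiterO : (fun w => (X + X ^ e * g).compose w)^[n] X ∈ O :=
    Set.MapsTo.iterate (fun w hw => compose_mem_integralPowerSeries hfO hw) n
      X_mem_integralPowerSeries
  obtain ⟨h, hh⟩ := X_pow_dvd_iterate_compose_sub he.le g n
  have hhO : X ^ (2 * e - 1) * h ∈ O := by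
    rw [← hh]
    exact O.sub_mem (O.sub_mem hiterO X_mem_integralPowerSeries)
      (O.mul_mem (natCast_mem O n) (O.mul_mem (O.pow_mem X_mem_integralPowerSeries e) hgO))
  refine ⟨h, mem_integralPowerSeries.mp (mem_integralPowerSeries_of_X_pow_mul_mem hhO), ?_⟩
  rw [← hh]
  ring

/-- for `f(z) = z + z^e g(z)` with `g` having coefficients in
`O_p` and `e > 1`, for every `n ≥ 1` there is `h_n` with coefficients in `O_p`
such that `f^n(z) = z + n z^e g(z) + z^{2e-1} h_n(z)`. -/
theorem stmt1 {K : Type*} [NormedField K] [IsUltrametricDist K] [CompleteSpace K]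
    (e : ℕ) (he : 1 < e)
    (g : PowerSeries K) (hg : ∀ i, ‖PowerSeries.coeff i g‖ ≤ 1)
    (n : ℕ) (hn : 1 ≤ n) :
    ∃ h : PowerSeries K, (∀ i, ‖PowerSeries.coeff i h‖ ≤ 1) ∧
      (fun w => (PowerSeries.X + PowerSeries.X ^ e * g).compose w)^[n] PowerSeries.X
        = PowerSeries.X + (n : PowerSeries K) * (PowerSeries.X ^ e * g)
          + PowerSeries.X ^ (2 * e - 1) * h :=
  stmt1_general e he g hg n
end

section
/- (Newton polygon root count) Let F(z) = Σ_{i≥1} b_i z^i be a nonzero power series with coefficients in O_p ⊆ C_p, and suppose F has at least n distinct roots in C_p, all of the same absolute value ρ with 0 < ρ < 1, where b_1 ≠ 0. Then ρ^n ≥ |b_1|. -/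
/-- Evaluation of the power series with coefficients `b` at `z`. -/
noncomputable def evalPS {K : Type*} [NormedField K] (b : ℕ → K) (z : K) : K :=
  ∑' i, b i * z ^ i

/-!
Dividing out a root `y` of `F = Σ b_i z^i` gives `F(z) = (z - y) G(z)` with
`G = Σ c_j z^j`, `c_j = Σ_i b_{i+j+1} y^i`. The ultrametric inequality keeps `‖c_j‖ ≤ 1`,
`F(0) = 0` forces `G(0) = 0`, and comparing linear coefficients gives `b_1 = -y c_1`, so
`‖b_1‖ = ‖y‖ ‖c_1‖`. The other roots of `F` are roots of `G`, and induction on the number of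
roots gives `‖b_1‖ ≤ ∏ ‖y‖ = ρ^{#S} ≤ ρ^n`.
-/

open Finset

section PowerSeries

variable {K : Type*} [NormedField K]

/-- The coefficients of `(F(z) - F(y)) / (z - y)` for `F = evalPS b`. -/
noncomputable def divXSub (b : ℕ → K) (y : K) (j : ℕ) : K :=
  evalPS (fun i => b (i + j + 1)) y

lemma evalPS_eq_add_mul_evalPS_succ {b : ℕ → K} {z : K} (hs : Summable fun i => b i * z ^ i) :
    evalPS b z = b 0 + z * evalPS (fun i => b (i + 1)) z := by
  rw [evalPS, hs.tsum_eq_zero_add, evalPS, ← tsum_mul_left]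
  congr 1
  · simp
  · exact tsum_congr fun i => by ring

lemma divXSub_zero (b : ℕ → K) (y : K) : divXSub b y 0 = evalPS (fun i => b (i + 1)) y := rfl

variable [IsUltrametricDist K]

lemma norm_divXSub_le_one {b : ℕ → K} (hb : ∀ i, ‖b i‖ ≤ 1) {y : K} (hy : ‖y‖ ≤ 1) (j : ℕ) :
    ‖divXSub b y j‖ ≤ 1 :=
  IsUltrametricDist.norm_tsum_le_of_forall_le_of_nonneg zero_le_one fun i => by
    rw [norm_mul, norm_pow]
    exact mul_le_one₀ (hb _) (by positivity) (pow_le_one₀ (norm_nonneg y) hy)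

variable [CompleteSpace K]

lemma summable_mul_pow_of_norm_le {b : ℕ → K} {C : ℝ} (hb : ∀ i, ‖b i‖ ≤ C) {z : K}
    (hz : ‖z‖ < 1) : Summable fun i => b i * z ^ i := by
  apply NonarchimedeanAddGroup.summable_of_tendsto_cofinite_zero
  rw [Nat.cofinite_eq_atTop]
  have hC : Filter.Tendsto (fun i => C * ‖z‖ ^ i) Filter.atTop (nhds 0) := by
    simpa using (tendsto_pow_atTop_nhds_zero_of_lt_one (norm_nonneg z) hz).const_mul C
  refine squeeze_zero_norm (fun i => ?_) hC
  rw [norm_mul, norm_pow]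
  exact mul_le_mul_of_nonneg_right (hb i) (by positivity)

section DivRoot

variable {b : ℕ → K} (hb : ∀ i, ‖b i‖ ≤ 1) {y : K} (hy : ‖y‖ < 1)
include hb hy

lemma divXSub_eq_add_mul_divXSub_succ (j : ℕ) :
    divXSub b y j = b (j + 1) + y * divXSub b y (j + 1) := by
  rw [divXSub, evalPS_eq_add_mul_evalPS_succ (summable_mul_pow_of_norm_le (fun _ => hb _) hy)]
  simp only [divXSub, zero_add]
  congr 3
  funext i
  congr 1
  omega

lemma evalPS_sub_evalPS {w : K} (hw : ‖w‖ < 1) :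
    evalPS b w - evalPS b y = (w - y) * evalPS (divXSub b y) w := by
  set c := divXSub b y
  have hc : ∀ j, ‖c j‖ ≤ 1 := norm_divXSub_le_one hb hy.le
  have hb_succ :
      evalPS (fun i => b (i + 1)) w = evalPS c w - y * evalPS (fun i => c (i + 1)) w := by
    rw [evalPS, evalPS, evalPS, ← tsum_mul_left,
      ← (summable_mul_pow_of_norm_le hc hw).tsum_sub
        ((summable_mul_pow_of_norm_le (fun _ => hc _) hw).mul_left y)]
    exact tsum_congr fun i => by
      rw [show c i = _ from divXSub_eq_add_mul_divXSub_succ hb hy i]; ring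
  have hFw := evalPS_eq_add_mul_evalPS_succ (summable_mul_pow_of_norm_le hb hw)
  have hFy := evalPS_eq_add_mul_evalPS_succ (summable_mul_pow_of_norm_le hb hy)
  have hGw := evalPS_eq_add_mul_evalPS_succ (summable_mul_pow_of_norm_le hc hw)
  rw [← divXSub_zero] at hFy
  -- with `G₁ = Σ c_{j+1} z^j`: `F(w) = b₀ + w (G(w) - y G₁(w))`, `F(y) = b₀ + y c₀`, `G(w) = c₀ + w G₁(w)`
  linear_combination hFw - hFy + w * hb_succ + y * hGw

end DivRoot

theorem norm_coeff_one_le_prod_norm_roots (S : Finset K) {b : ℕ → K} (h0 : b 0 = 0)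
    (hb : ∀ i, ‖b i‖ ≤ 1) (hS : ∀ y ∈ S, y ≠ 0 ∧ ‖y‖ < 1 ∧ evalPS b y = 0) :
    ‖b 1‖ ≤ ∏ y ∈ S, ‖y‖ := by
  classical
  induction S using Finset.induction_on generalizing b with
  | empty => simpa using hb 1
  | insert y T hyT ih =>
    obtain ⟨hy0, hy, hFy⟩ := hS y (mem_insert_self y T)
    set c := divXSub b y
    have hc0 : c 0 = 0 := by
      have := evalPS_eq_add_mul_evalPS_succ (summable_mul_pow_of_norm_le hb hy)
      rw [hFy, h0, ← divXSub_zero, zero_add, eq_comm] at this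
      exact (mul_eq_zero.mp this).resolve_left hy0
    have hb1 : b 1 = -(y * c 1) := by
      linear_combination -(divXSub_eq_add_mul_divXSub_succ hb hy 0) + hc0
    have hT : ∀ w ∈ T, w ≠ 0 ∧ ‖w‖ < 1 ∧ evalPS c w = 0 := by
      intro w hwT
      obtain ⟨hw0, hw, hFw⟩ := hS w (mem_insert_of_mem hwT)
      have hwy : w - y ≠ 0 := sub_ne_zero.mpr (ne_of_mem_of_not_mem hwT hyT)
      have := evalPS_sub_evalPS hb hy hw
      rw [hFw, hFy, sub_zero, eq_comm] at this
      exact ⟨hw0, hw, (mul_eq_zero.mp this).resolve_left hwy⟩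
    calc ‖b 1‖ = ‖y‖ * ‖c 1‖ := by rw [hb1, norm_neg, norm_mul]
      _ ≤ ‖y‖ * ∏ w ∈ T, ‖w‖ := by gcongr; exact ih hc0 (norm_divXSub_le_one hb hy.le) hT
      _ = ∏ w ∈ insert y T, ‖w‖ := (prod_insert hyT).symm

end PowerSeries

theorem stmt8_general {K : Type*} [NormedField K] [IsUltrametricDist K] [CompleteSpace K]
    (b : ℕ → K) (h0 : b 0 = 0) (hb : ∀ i, ‖b i‖ ≤ 1)
    (ρ : ℝ) (hρ0 : 0 < ρ) (hρ1 : ρ < 1)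
    (n : ℕ) (S : Finset K) (hcard : n ≤ S.card)
    (hroots : ∀ y ∈ S, ‖y‖ = ρ ∧ evalPS b y = 0) :
    ‖b 1‖ ≤ ρ ^ n := by
  have hS : ∀ y ∈ S, y ≠ 0 ∧ ‖y‖ < 1 ∧ evalPS b y = 0 := fun y hy => by
    obtain ⟨hy, hFy⟩ := hroots y hy
    exact ⟨norm_pos_iff.mp (hy ▸ hρ0), hy ▸ hρ1, hFy⟩
  calc ‖b 1‖ ≤ ∏ y ∈ S, ‖y‖ := norm_coeff_one_le_prod_norm_roots S h0 hb hS
    _ = ρ ^ S.card := by rw [prod_congr rfl fun y hy => (hroots y hy).1, prod_const]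
    _ ≤ ρ ^ n := pow_le_pow_of_le_one hρ0.le hρ1.le hcard

/-- Newton polygon root count: let `F(z) = Σ_{i≥1} b_i z^i` be a
nonzero power series with coefficients in `O_p`, with `b_1 ≠ 0`, having at
least `n` distinct roots in `ℂ_p`, all of the same absolute value `ρ` with
`0 < ρ < 1`.  Then `ρ^n ≥ ‖b_1‖`. -/
theorem stmt8 {K : Type*} [NormedField K] [IsUltrametricDist K] [CompleteSpace K]
    [IsAlgClosed K]
    (b : ℕ → K) (h0 : b 0 = 0) (hb : ∀ i, ‖b i‖ ≤ 1) (hb1 : b 1 ≠ 0)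
    (ρ : ℝ) (hρ0 : 0 < ρ) (hρ1 : ρ < 1)
    (n : ℕ) (S : Finset K) (hcard : n ≤ S.card)
    (hroots : ∀ y ∈ S, ‖y‖ = ρ ∧ evalPS b y = 0) :
    ‖b 1‖ ≤ ρ ^ n :=
  stmt8_general b h0 hb ρ hρ0 hρ1 n S hcard hroots
end

section
/- Let f(z) = Σ_{i≥1} a_i z^i with a_i ∈ O_p ⊆ C_p, |a_1| = 1, and let m ≥ 1 be the smallest integer with |a_1^m - 1| < p^{-1/(p-1)}. If a_1^m ≠ 1, then with κ = |log_p(a_1^m)| one has |a_1^n - 1| ≥ κ |n| for every n ≥ 1, where |n| is the p-adic norm of n. -/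
open IsUltrametricDist Finset


/-- The `p`-adic logarithm, given by the usual series
`log(a) = Σ_{n≥1} (-1)^{n+1} (a-1)^n / n`, which converges for `‖a - 1‖ < 1`. -/
noncomputable def padicLogOf {K : Type*} [NormedField K] (a : K) : K :=
  ∑' n : ℕ, ((-1) ^ n / (n + 1 : K)) * (a - 1) ^ (n + 1)

section Aux

variable {p : ℕ} {K : Type*} [NormedField K] [IsUltrametricDist K]

lemma aux_norm_coprime (hp : p.Prime) (hpK : ‖(p : K)‖ = (p : ℝ)⁻¹)
    {u : ℕ} (hu : ¬ p ∣ u) : ‖(u : K)‖ = 1 := by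
  have h1 : Nat.gcd p u = 1 := (Nat.Prime.coprime_iff_not_dvd hp).mpr hu
  have hbez := Nat.gcd_eq_gcd_ab p u
  rw [h1] at hbez
  have hK : (1 : K) = (p : K) * ((Nat.gcdA p u : ℤ) : K) + (u : K) * ((Nat.gcdB p u : ℤ) : K) := by
    have h := congrArg (fun z : ℤ => (z : K)) hbez
    push_cast at h
    exact h
  by_contra hne
  have hult : ‖(u : K)‖ < 1 := lt_of_le_of_ne (norm_natCast_le_one K u) hne
  have hp1 : (1 : ℝ) < (p : ℝ) := by exact_mod_cast hp.one_lt
  have h1le : (1 : ℝ) ≤ max ‖(p : K) * ((Nat.gcdA p u : ℤ) : K)‖ ‖(u : K) * ((Nat.gcdB p u : ℤ) : K)‖ := by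
    calc (1:ℝ) = ‖(1 : K)‖ := norm_one.symm
    _ ≤ _ := by rw [hK]; exact norm_add_le_max _ _
  have hA : ‖(p : K) * ((Nat.gcdA p u : ℤ) : K)‖ < 1 := by
    rw [norm_mul, hpK]
    calc (p:ℝ)⁻¹ * ‖((Nat.gcdA p u : ℤ) : K)‖ ≤ (p:ℝ)⁻¹ * 1 := by
          exact mul_le_mul_of_nonneg_left (norm_intCast_le_one K _) (by positivity)
    _ < 1 := by rw [mul_one]; exact inv_lt_one_of_one_lt₀ hp1
  have hB : ‖(u : K) * ((Nat.gcdB p u : ℤ) : K)‖ < 1 := by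
    rw [norm_mul]
    calc ‖(u:K)‖ * ‖((Nat.gcdB p u : ℤ) : K)‖ ≤ ‖(u:K)‖ * 1 :=
          mul_le_mul_of_nonneg_left (norm_intCast_le_one K _) (norm_nonneg _)
    _ < 1 := by rw [mul_one]; exact hult
  have := max_lt hA hB
  linarith

lemma aux_pow_sub_one_le {c : K} (hc : ‖c‖ ≤ 1) (i : ℕ) : ‖c ^ i - 1‖ ≤ ‖c - 1‖ := by
  rw [← geom_sum_mul c i, norm_mul]
  have h1 : ‖∑ j ∈ range i, c ^ j‖ ≤ 1 := by
    refine norm_sum_le_of_forall_le_of_nonneg zero_le_one fun j _ => ?_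
    rw [norm_pow]
    exact pow_le_one₀ (norm_nonneg c) hc
  calc ‖∑ j ∈ range i, c ^ j‖ * ‖c - 1‖ ≤ 1 * ‖c - 1‖ :=
        mul_le_mul_of_nonneg_right h1 (norm_nonneg _)
  _ = ‖c - 1‖ := one_mul _

lemma aux_norm_one_of_sub_lt {c : K} (hc : ‖c - 1‖ < 1) : ‖c‖ ≤ 1 := by
  calc ‖c‖ = ‖(c - 1) + 1‖ := by ring_nf
  _ ≤ max ‖c - 1‖ ‖(1:K)‖ := norm_add_le_max _ _
  _ ≤ 1 := max_le hc.le (by simp)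

lemma aux_pow_coprime (hp : p.Prime) (hpK : ‖(p : K)‖ = (p : ℝ)⁻¹)
    {u : ℕ} (hu : ¬ p ∣ u) {c : K} (hc : ‖c - 1‖ < 1) : ‖c ^ u - 1‖ = ‖c - 1‖ := by
  have hcle : ‖c‖ ≤ 1 := aux_norm_one_of_sub_lt hc
  rw [← geom_sum_mul c u, norm_mul]
  have hsplit : ∑ j ∈ range u, c ^ j = (u : K) + ∑ j ∈ range u, (c ^ j - 1) := by
    rw [Finset.sum_sub_distrib]
    simp
  have hT : ‖∑ j ∈ range u, (c ^ j - 1)‖ ≤ ‖c - 1‖ :=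
    norm_sum_le_of_forall_le_of_nonneg (norm_nonneg _) fun j _ => aux_pow_sub_one_le hcle j
  have hug : ‖(u : K)‖ = 1 := aux_norm_coprime hp hpK hu
  have hgeom : ‖∑ j ∈ range u, c ^ j‖ = 1 := by
    rw [hsplit]
    have hlt : ‖∑ j ∈ range u, (c ^ j - 1)‖ < 1 := lt_of_le_of_lt hT hc
    have hne' : ‖(u : K)‖ ≠ ‖∑ j ∈ range u, (c ^ j - 1)‖ := by
      rw [hug]; exact ne_of_gt hlt
    rw [norm_add_eq_max_of_norm_ne_norm hne', hug]
    exact max_eq_left (hug ▸ hlt.le)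
  rw [hgeom, one_mul]

end Aux

section Aux2

variable {p : ℕ} {K : Type*} [NormedField K] [IsUltrametricDist K]

lemma aux_r_pos (hp : p.Prime) : 0 < (p : ℝ) ^ (-(1 : ℝ) / ((p : ℝ) - 1)) :=
  Real.rpow_pos_of_pos (by exact_mod_cast hp.pos) _

lemma aux_r_lt_one (hp : p.Prime) : (p : ℝ) ^ (-(1 : ℝ) / ((p : ℝ) - 1)) < 1 := by
  have hp1 : (1 : ℝ) < (p : ℝ) := by exact_mod_cast hp.one_lt
  exact Real.rpow_lt_one_of_one_lt_of_neg hp1 (div_neg_of_neg_of_pos (by norm_num) (by linarith))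

lemma aux_r_pow (hp : p.Prime) :
    ((p : ℝ) ^ (-(1 : ℝ) / ((p : ℝ) - 1))) ^ (p - 1) = (p : ℝ)⁻¹ := by
  have hp0 : (0 : ℝ) ≤ (p : ℝ) := by positivity
  have hp1 : (1 : ℝ) < (p : ℝ) := by exact_mod_cast hp.one_lt
  rw [← Real.rpow_natCast ((p : ℝ) ^ (-(1 : ℝ) / ((p : ℝ) - 1))) (p - 1), ← Real.rpow_mul hp0]
  have hcast : ((p - 1 : ℕ) : ℝ) = (p : ℝ) - 1 := by
    push_cast [Nat.cast_sub hp.one_lt.le]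
    ring
  rw [hcast]
  have h2 : -(1 : ℝ) / ((p : ℝ) - 1) * ((p : ℝ) - 1) = -1 := by
    rw [div_mul_eq_mul_div, mul_div_assoc, div_self (by linarith : (p : ℝ) - 1 ≠ 0)]
    ring
  rw [h2, Real.rpow_neg_one]

lemma aux_pow_p (hp : p.Prime) (hpK : ‖(p : K)‖ = (p : ℝ)⁻¹) {x : K}
    (hx : ‖x‖ < (p : ℝ) ^ (-(1 : ℝ) / ((p : ℝ) - 1))) :
    ‖(1 + x) ^ p - 1‖ = (p : ℝ)⁻¹ * ‖x‖ := by
  rcases eq_or_ne x 0 with rfl | hx0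
  · simp
  have hxpos : 0 < ‖x‖ := norm_pos_iff.mpr hx0
  have hxlt1 : ‖x‖ < 1 := lt_trans hx (aux_r_lt_one hp)
  have hrpow : ‖x‖ ^ (p - 1) < (p : ℝ)⁻¹ := by
    rw [← aux_r_pow hp]
    exact pow_lt_pow_left₀ hx (norm_nonneg x) (by have := hp.two_le; omega)
  obtain ⟨q, rfl⟩ : ∃ q, p = q + 2 := ⟨p - 2, by have := hp.two_le; omega⟩
  have hp1 : (1 : ℝ) < ((q + 2 : ℕ) : ℝ) := by exact_mod_cast hp.one_lt
  have hQ : (0 : ℝ) < ((q + 2 : ℕ) : ℝ)⁻¹ := by positivity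
  -- expansion
  have hexp : (1 + x) ^ (q + 2) - 1 =
      ((q + 2 : ℕ) : K) * x + ∑ k ∈ range (q + 1), x ^ (k + 2) * ((q + 2).choose (k + 2) : K) := by
    rw [add_comm (1 : K) x, add_pow]
    rw [Finset.sum_range_succ', Finset.sum_range_succ']
    simp only [one_pow, mul_one, pow_zero, Nat.choose_zero_right, Nat.cast_one, pow_one,
      Nat.choose_one_right]
    have hcongr : ∑ k ∈ range (q + 1), x ^ (k + 1 + 1) * ((q + 2).choose (k + 1 + 1) : K)
        = ∑ k ∈ range (q + 1), x ^ (k + 2) * ((q + 2).choose (k + 2) : K) := by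
      refine Finset.sum_congr rfl fun k _ => by norm_num
    rw [hcongr, Nat.choose_one_right]
    push_cast
    ring
  set E := ∑ k ∈ range (q + 1), x ^ (k + 2) * ((q + 2).choose (k + 2) : K) with hE
  set C := max (‖x‖ ^ 2 * ((q + 2 : ℕ) : ℝ)⁻¹) (‖x‖ ^ (q + 2)) with hC
  have hEC : ‖E‖ ≤ C := by
    refine norm_sum_le_of_forall_le_of_nonneg (le_max_of_le_right (by positivity)) fun k hk => ?_
    rcases eq_or_ne k q with rfl | hkq
    · rw [Nat.choose_self]
      simp only [Nat.cast_one, mul_one, norm_pow]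
      exact le_max_of_le_right le_rfl
    · have hklt : k + 2 < q + 2 := by
        have := Finset.mem_range.mp hk; omega
      obtain ⟨c, hc⟩ := hp.dvd_choose_self (by omega : k + 2 ≠ 0) hklt
      refine le_max_of_le_left ?_
      rw [norm_mul, norm_pow, hc, Nat.cast_mul, norm_mul, hpK]
      calc ‖x‖ ^ (k + 2) * (((q + 2 : ℕ) : ℝ)⁻¹ * ‖(c : K)‖)
          ≤ ‖x‖ ^ 2 * (((q + 2 : ℕ) : ℝ)⁻¹ * 1) := by
            refine mul_le_mul ?_ ?_ (by positivity) (by positivity)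
            · exact pow_le_pow_of_le_one (norm_nonneg x) hxlt1.le (by omega)
            · exact mul_le_mul_of_nonneg_left (norm_natCast_le_one K c) hQ.le
      _ = ‖x‖ ^ 2 * ((q + 2 : ℕ) : ℝ)⁻¹ := by rw [mul_one]
  have hClt : C < ((q + 2 : ℕ) : ℝ)⁻¹ * ‖x‖ := by
    refine max_lt ?_ ?_
    · have : ‖x‖ ^ 2 < ‖x‖ := by nlinarith
      calc ‖x‖ ^ 2 * ((q + 2 : ℕ) : ℝ)⁻¹ = ((q + 2 : ℕ) : ℝ)⁻¹ * ‖x‖ ^ 2 := by ring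
      _ < ((q + 2 : ℕ) : ℝ)⁻¹ * ‖x‖ := by exact mul_lt_mul_of_pos_left this hQ
    · have h2 : ‖x‖ ^ (q + 1) < ((q + 2 : ℕ) : ℝ)⁻¹ := by
        simpa using hrpow
      calc ‖x‖ ^ (q + 2) = ‖x‖ ^ (q + 1) * ‖x‖ := by ring
      _ < ((q + 2 : ℕ) : ℝ)⁻¹ * ‖x‖ := mul_lt_mul_of_pos_right h2 hxpos
  have hlead : ‖((q + 2 : ℕ) : K) * x‖ = ((q + 2 : ℕ) : ℝ)⁻¹ * ‖x‖ := by
    rw [norm_mul, hpK]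
  have hlast : ‖(1 + x) ^ (q + 2) - 1‖ = ((q + 2 : ℕ) : ℝ)⁻¹ * ‖x‖ := by
    rw [hexp, norm_add_eq_max_of_norm_ne_norm
      (by rw [hlead]; exact ne_of_gt (lt_of_le_of_lt hEC hClt)), hlead]
    exact max_eq_left (le_of_lt (lt_of_le_of_lt hEC (hlead ▸ hClt)))
  simpa using hlast

end Aux2

section Aux3

variable {p : ℕ} {K : Type*} [NormedField K] [IsUltrametricDist K]

lemma aux_pow_ppow (hp : p.Prime) (hpK : ‖(p : K)‖ = (p : ℝ)⁻¹) {b : K}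
    (hb : ‖b - 1‖ < (p : ℝ) ^ (-(1 : ℝ) / ((p : ℝ) - 1))) (s : ℕ) :
    ‖b ^ (p ^ s) - 1‖ = ‖b - 1‖ * ((p : ℝ)⁻¹) ^ s := by
  induction s with
  | zero => simp
  | succ s ih =>
    have hinv1 : ((p : ℝ)⁻¹) ^ s ≤ 1 := by
      apply pow_le_one₀ (by positivity)
      exact inv_le_one_of_one_le₀ (by exact_mod_cast hp.one_le)
    have hlt : ‖b ^ (p ^ s) - 1‖ < (p : ℝ) ^ (-(1 : ℝ) / ((p : ℝ) - 1)) := by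
      rw [ih]
      calc ‖b - 1‖ * ((p : ℝ)⁻¹) ^ s ≤ ‖b - 1‖ * 1 :=
            mul_le_mul_of_nonneg_left hinv1 (norm_nonneg _)
      _ = ‖b - 1‖ := mul_one _
      _ < _ := hb
    have hstep := aux_pow_p hp hpK hlt
    rw [add_sub_cancel] at hstep
    rw [pow_succ, pow_mul, hstep, ih]
    ring

end Aux3

section Aux4

variable {p : ℕ} {K : Type*} [NormedField K] [IsUltrametricDist K] [CompleteSpace K]

lemma aux_log_norm (hp : p.Prime) (hpK : ‖(p : K)‖ = (p : ℝ)⁻¹) {x : K} (hx0 : x ≠ 0)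
    (hx : ‖x‖ < (p : ℝ) ^ (-(1 : ℝ) / ((p : ℝ) - 1))) :
    ‖padicLogOf (1 + x)‖ = ‖x‖ := by
  have hp1 : (1 : ℝ) < (p : ℝ) := by exact_mod_cast hp.one_lt
  have hxpos : 0 < ‖x‖ := norm_pos_iff.mpr hx0
  set A : ℝ := (p : ℝ) ^ ((1 : ℝ) / ((p : ℝ) - 1)) with hA
  have hApos : 0 < A := Real.rpow_pos_of_pos (by positivity) _
  set q : ℝ := ‖x‖ * A with hq
  have hq0 : 0 ≤ q := by positivity
  have hrA : (p : ℝ) ^ (-(1 : ℝ) / ((p : ℝ) - 1)) * A = 1 := by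
    rw [hA, ← Real.rpow_add (by positivity)]
    rw [neg_div]
    simp
  have hq1 : q < 1 := by
    rw [hq, ← hrA]
    exact mul_lt_mul_of_pos_right hx hApos
  set c : ℕ → K := fun n => ((-1) ^ n / (n + 1 : K)) * x ^ (n + 1) with hc
  have hterm : ∀ n : ℕ, ‖c n‖ ≤ ‖x‖ * q ^ n := by
    intro n
    set v := (n + 1).factorization p with hv
    have hn0 : n + 1 ≠ 0 := Nat.succ_ne_zero n
    have huv : p ^ v * ((n + 1) / p ^ v) = n + 1 := Nat.ordProj_mul_ordCompl_eq_self (n + 1) p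
    have hu : ¬ p ∣ (n + 1) / p ^ v := Nat.not_dvd_ordCompl hp hn0
    have hnorm_n1 : ‖((n + 1 : ℕ) : K)‖ = ((p : ℝ)⁻¹) ^ v := by
      rw [← huv, Nat.cast_mul, norm_mul, Nat.cast_pow, norm_pow, hpK,
        aux_norm_coprime hp hpK hu, mul_one]
    -- nat inequality: (p - 1) * v ≤ n
    have hple : (p : ℝ) ^ v ≤ (n : ℝ) + 1 := by
      have hdvd : p ^ v ∣ n + 1 := ⟨_, huv.symm⟩
      have := Nat.le_of_dvd (Nat.succ_pos n) hdvd
      exact_mod_cast this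
    have hbern : 1 + (v : ℝ) * ((p : ℝ) - 1) ≤ (p : ℝ) ^ v := by
      have := one_add_mul_le_pow (a := (p : ℝ) - 1) (by linarith) v
      simpa using this
    have hvle : (v : ℝ) ≤ (n : ℝ) / ((p : ℝ) - 1) :=
      (le_div_iff₀ (by linarith)).mpr (by nlinarith)
    have hAv : (p : ℝ) ^ v ≤ A ^ n := by
      calc (p : ℝ) ^ v = (p : ℝ) ^ ((v : ℕ) : ℝ) := (Real.rpow_natCast _ _).symm
      _ ≤ (p : ℝ) ^ ((n : ℝ) / ((p : ℝ) - 1)) :=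
          Real.rpow_le_rpow_of_exponent_le hp1.le hvle
      _ = A ^ n := by
          rw [hA, ← Real.rpow_natCast ((p : ℝ) ^ ((1 : ℝ) / ((p : ℝ) - 1))) n,
            ← Real.rpow_mul (by positivity)]
          congr 1
          ring
    have hcn : ‖c n‖ = (p : ℝ) ^ v * ‖x‖ ^ (n + 1) := by
      rw [hc]
      simp only [norm_mul, norm_div, norm_pow, norm_neg, norm_one, one_pow, one_div]
      have : ((n : K) + 1) = ((n + 1 : ℕ) : K) := by push_cast; ring
      rw [this, hnorm_n1]
      rw [inv_pow, inv_inv]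
    rw [hcn]
    calc (p : ℝ) ^ v * ‖x‖ ^ (n + 1) ≤ A ^ n * ‖x‖ ^ (n + 1) :=
          mul_le_mul_of_nonneg_right hAv (by positivity)
    _ = ‖x‖ * q ^ n := by rw [hq, mul_pow]; ring
  have hsum : Summable c := by
    apply NonarchimedeanAddGroup.summable_of_tendsto_cofinite_zero
    rw [Nat.cofinite_eq_atTop]
    apply squeeze_zero_norm hterm
    have := tendsto_pow_atTop_nhds_zero_of_lt_one hq0 hq1
    simpa using this.const_mul ‖x‖
  have hlog : padicLogOf (1 + x) = x + ∑' n : ℕ, c (n + 1) := by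
    rw [padicLogOf, add_sub_cancel_left]
    rw [Summable.tsum_eq_zero_add hsum]
    congr 1
    simp [hc]
  have htail : ‖∑' n : ℕ, c (n + 1)‖ ≤ ‖x‖ * q := by
    refine norm_tsum_le_of_forall_le_of_nonneg (by positivity) fun n => ?_
    calc ‖c (n + 1)‖ ≤ ‖x‖ * q ^ (n + 1) := hterm (n + 1)
    _ ≤ ‖x‖ * q ^ 1 := by
        exact mul_le_mul_of_nonneg_left (pow_le_pow_of_le_one hq0 hq1.le (by omega)) (norm_nonneg _)
    _ = ‖x‖ * q := by rw [pow_one]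
  have htail_lt : ‖∑' n : ℕ, c (n + 1)‖ < ‖x‖ := by
    calc ‖∑' n : ℕ, c (n + 1)‖ ≤ ‖x‖ * q := htail
    _ < ‖x‖ * 1 := mul_lt_mul_of_pos_left hq1 hxpos
    _ = ‖x‖ := mul_one _
  rw [hlog, norm_add_eq_max_of_norm_ne_norm (ne_of_gt htail_lt)]
  exact max_eq_left htail_lt.le

end Aux4

/-- let `f(z) = Σ_{i≥1} a_i z^i` with `a_i ∈ O_p ⊆ ℂ_p`,
`‖a_1‖ = 1`, and let `m ≥ 1` be the smallest integer with
`‖a_1^m - 1‖ < p^{-1/(p-1)}`.  If `a_1^m ≠ 1`, then with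
`κ = ‖log_p (a_1^m)‖` one has `‖a_1^n - 1‖ ≥ κ·|n|_p` for every `n ≥ 1`. -/
theorem stmt16 {p : ℕ} [Fact p.Prime] {K : Type*} [NormedField K] [IsUltrametricDist K]
    [CompleteSpace K] [IsAlgClosed K] [CharZero K]
    (hpK : ‖(p : K)‖ = (p : ℝ)⁻¹)
    (a : ℕ → K) (h0 : a 0 = 0) (ha : ∀ i, ‖a i‖ ≤ 1) (ha1 : ‖a 1‖ = 1)
    (m : ℕ) (hm : 1 ≤ m)
    (hmlt : ‖a 1 ^ m - 1‖ < (p : ℝ) ^ (-(1 : ℝ) / ((p : ℝ) - 1)))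
    (hmin : ∀ m' : ℕ, 1 ≤ m' → m' < m →
      (p : ℝ) ^ (-(1 : ℝ) / ((p : ℝ) - 1)) ≤ ‖a 1 ^ m' - 1‖)
    (hne : a 1 ^ m ≠ 1) :
    ∀ n : ℕ, 1 ≤ n → ‖padicLogOf (a 1 ^ m)‖ * ‖(n : ℚ_[p])‖ ≤ ‖a 1 ^ n - 1‖ := by
  intro n hn
  have hp : p.Prime := Fact.out
  set b := a 1 ^ m with hb
  have hbx : b - 1 ≠ 0 := sub_ne_zero.mpr hne
  have hkap : ‖padicLogOf b‖ = ‖b - 1‖ := by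
    have h := aux_log_norm hp hpK hbx hmlt
    rwa [show (1 : K) + (b - 1) = b by ring] at h
  set d := Nat.gcd m n with hd
  obtain ⟨m', hm'⟩ : d ∣ m := Nat.gcd_dvd_left m n
  obtain ⟨k, hk⟩ : d ∣ n := Nat.gcd_dvd_right m n
  have hk0 : k ≠ 0 := by rintro rfl; omega
  set s := k.factorization p with hs
  set u := k / p ^ s with hu'
  have huv : p ^ s * u = k := Nat.ordProj_mul_ordCompl_eq_self k p
  have hu : ¬ p ∣ u := Nat.not_dvd_ordCompl hp hk0
  have hppow : ‖b ^ (p ^ s) - 1‖ = ‖b - 1‖ * ((p : ℝ)⁻¹) ^ s := aux_pow_ppow hp hpK hmlt s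
  have hclt : ‖b ^ (p ^ s) - 1‖ < 1 := by
    rw [hppow]
    have h1 : ((p : ℝ)⁻¹) ^ s ≤ 1 :=
      pow_le_one₀ (by positivity) (inv_le_one_of_one_le₀ (by exact_mod_cast hp.one_le))
    calc ‖b - 1‖ * ((p : ℝ)⁻¹) ^ s ≤ ‖b - 1‖ * 1 :=
          mul_le_mul_of_nonneg_left h1 (norm_nonneg _)
    _ = ‖b - 1‖ := mul_one _
    _ < _ := lt_trans hmlt (aux_r_lt_one hp)
  have hcu : ‖(b ^ (p ^ s)) ^ u - 1‖ = ‖b ^ (p ^ s) - 1‖ := aux_pow_coprime hp hpK hu hclt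
  have hbk : (b ^ (p ^ s)) ^ u = (a 1 ^ n) ^ m' := by
    rw [hb, ← pow_mul, ← pow_mul, ← pow_mul]
    congr 1
    calc m * (p ^ s * u) = m * k := by rw [huv]
    _ = n * m' := by rw [hm', hk]; ring
  have hle : ‖(a 1 ^ n) ^ m' - 1‖ ≤ ‖a 1 ^ n - 1‖ :=
    aux_pow_sub_one_le (by rw [norm_pow, ha1, one_pow]) m'
  have hnorm_n : ‖(n : ℚ_[p])‖ ≤ ((p : ℝ)⁻¹) ^ s := by
    have hdvd : (p : ℤ) ^ s ∣ (n : ℤ) := by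
      have h1 : p ^ s ∣ k := ⟨u, huv.symm⟩
      have h2 : k ∣ n := ⟨d, by rw [hk]; ring⟩
      exact_mod_cast h1.trans h2
    have h := (Padic.norm_int_le_pow_iff_dvd (n : ℤ) s).mpr (by exact_mod_cast hdvd)
    rw [show (((n : ℤ)) : ℚ_[p]) = (n : ℚ_[p]) by push_cast; rfl] at h
    calc ‖(n : ℚ_[p])‖ ≤ (p : ℝ) ^ (-(s : ℤ)) := h
    _ = ((p : ℝ)⁻¹) ^ s := by
        rw [zpow_neg, zpow_natCast, inv_pow]
  calc ‖padicLogOf b‖ * ‖(n : ℚ_[p])‖ ≤ ‖b - 1‖ * ((p : ℝ)⁻¹) ^ s := by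
        rw [hkap]
        exact mul_le_mul_of_nonneg_left hnorm_n (norm_nonneg _)
  _ = ‖(a 1 ^ n) ^ m' - 1‖ := by rw [← hppow, ← hcu, hbk]
  _ ≤ ‖a 1 ^ n - 1‖ := hle
end

section
/- Let p > 2 and let ζ range over the roots of unity of order dividing 2^n − 1 in C_p. If |x| > 1 then 2^{-n} Σ_{ζ^{2^n - 1} = 1} log|x − ζ| → log|x| as n → ∞; if |x| < 1 then the limit is 0; if |x| = 1 and x is not a root of unity of order prime to p then the limit is also 0. -/
/-!
Roots of unity have norm one, so for `‖x‖ ≠ 1` every term equals `log (max ‖x‖ 1)` and the sum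
is `(2^n - 1) · log (max ‖x‖ 1)`.

For `‖x‖ = 1` every term is `≤ 0`, and the sum is bounded below as follows. Let `r` be the
`N`-th root of unity nearest to `x`. By the ultrametric inequality `‖r - ζ‖ ≤ ‖x - ζ‖` for every
other root `ζ`, so `∏_{ζ ≠ r} ‖x - ζ‖ ≥ ‖N r^(N-1)‖ = ‖N‖ ≥ 1/N`. Moreover `‖x - r‖` is bounded
below independently of `N`: a root of unity `η ≠ 1` has a power `y ≠ 1` of prime order `q`, and
`q = ∑_{i<q} (1 - y^i)` gives `p⁻¹ ≤ ‖q‖ ≤ ‖y - 1‖ ≤ ‖η - 1‖`, so distinct roots of unity are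
`p⁻¹`-separated and at most one of them comes close to `x`. Hence the sum is at least
`C - log N ≥ C - n log 2`, which is `o(2^n)`.
-/

open Polynomial Filter Topology

section Metric

variable {X : Type*} [MetricSpace X]

theorem exists_pos_forall_le_dist_of_separated {S : Set X} {δ : ℝ} (hδ : 0 < δ)
    (hS : ∀ a ∈ S, ∀ b ∈ S, a ≠ b → δ ≤ dist a b) (x : X) :
    ∃ c > 0, ∀ a ∈ S, a ≠ x → c ≤ dist x a := by
  by_cases h : ∃ a₀ ∈ S, a₀ ≠ x ∧ dist x a₀ < δ / 2
  · obtain ⟨a₀, ha₀S, ha₀x, ha₀⟩ := h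
    refine ⟨min (dist x a₀) (δ / 2), lt_min (dist_pos.2 ha₀x.symm) (half_pos hδ),
      fun a ha _ => ?_⟩
    rcases eq_or_ne a a₀ with rfl | hne
    · exact min_le_left _ _
    · linarith [hS a ha a₀ ha₀S hne, dist_triangle_left a a₀ x, min_le_right (dist x a₀) (δ / 2)]
  · push Not at h
    exact ⟨δ / 2, half_pos hδ, h⟩

end Metric

theorem isOfFinOrder_div {G₀ : Type*} [CommGroupWithZero G₀] {a b : G₀} (ha : IsOfFinOrder a)
    (hb : IsOfFinOrder b) : IsOfFinOrder (a / b) := by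
  obtain ⟨m, hm, ham⟩ := isOfFinOrder_iff_pow_eq_one.1 ha
  obtain ⟨n, hn, hbn⟩ := isOfFinOrder_iff_pow_eq_one.1 hb
  refine isOfFinOrder_iff_pow_eq_one.2 ⟨m * n, Nat.mul_pos hm hn, ?_⟩
  rw [div_pow, pow_mul, ham, one_pow, mul_comm, pow_mul, hbn, one_pow, div_one]

theorem roots_X_pow_sub_one {R : Type*} [CommRing R] [IsDomain R] (N : ℕ) :
    (X ^ N - 1 : R[X]).roots = nthRoots N 1 := by
  rw [nthRoots, C_1]

theorem isOfFinOrder_of_mem_nthRoots_one {R : Type*} [CommRing R] [IsDomain R] {N : ℕ} {ζ : R}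
    (hζ : ζ ∈ nthRoots N (1 : R)) : IsOfFinOrder ζ := by
  have hN : 0 < N := Nat.pos_of_ne_zero (by rintro rfl; simp at hζ)
  exact isOfFinOrder_iff_pow_eq_one.2 ⟨N, hN, (mem_nthRoots hN).1 hζ⟩

theorem IsAlgClosed.card_nthRoots {K : Type*} [Field K] [IsAlgClosed K] (N : ℕ) (a : K) :
    Multiset.card (nthRoots N a) = N := by
  rw [nthRoots, splits_iff_card_roots.1 (IsAlgClosed.splits _), natDegree_X_pow_sub_C]

section Ultrametric

variable {K : Type*} [NormedField K] [IsUltrametricDist K]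

theorem norm_pow_sub_one_le_norm_sub_one {y : K} (hy : ‖y‖ ≤ 1) (i : ℕ) :
    ‖y ^ i - 1‖ ≤ ‖y - 1‖ := by
  rw [← geom_sum_mul, norm_mul]
  refine mul_le_of_le_one_left (norm_nonneg _) ?_
  refine IsUltrametricDist.norm_sum_le_of_forall_le_of_nonneg zero_le_one fun j _ => ?_
  rw [norm_pow]
  exact pow_le_one₀ (norm_nonneg _) hy

theorem norm_natCast_le_norm_sub_one {y : K} {q : ℕ} (hq : y ^ q = 1) (hy : y ≠ 1) :
    ‖(q : K)‖ ≤ ‖y - 1‖ := by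
  rcases eq_or_ne q 0 with rfl | hq0
  · simp
  have hy1 : ‖y‖ ≤ 1 :=
    (isOfFinOrder_iff_pow_eq_one.2 ⟨q, Nat.pos_of_ne_zero hq0, hq⟩).norm_eq_one.le
  have hgeom : ∑ i ∈ Finset.range q, y ^ i = 0 := by
    rw [geom_sum_eq hy, hq, sub_self, zero_div]
  have hq_sum : (q : K) = ∑ i ∈ Finset.range q, (1 - y ^ i) := by
    simp [Finset.sum_sub_distrib, hgeom]
  rw [hq_sum]
  refine IsUltrametricDist.norm_sum_le_of_forall_le_of_nonneg (norm_nonneg _) fun i _ => ?_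
  rw [norm_sub_rev]
  exact norm_pow_sub_one_le_norm_sub_one hy1 i

variable {p : ℕ} [hp : Fact p.Prime]

theorem norm_natCast_eq_one_of_not_dvd (hpK : ‖(p : K)‖ < 1) {m : ℕ} (hm : ¬p ∣ m) :
    ‖(m : K)‖ = 1 := by
  refine le_antisymm (IsUltrametricDist.norm_natCast_le_one K m) (not_lt.1 fun hlt => ?_)
  obtain ⟨a, b, hab⟩ :=
    Nat.isCoprime_iff_coprime.2 (Nat.coprime_comm.1 ((hp.out.coprime_iff_not_dvd).2 hm))
  have hab' : (a : K) * m + b * p = 1 := by exact_mod_cast congrArg (Int.cast : ℤ → K) hab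
  have hmax := IsUltrametricDist.norm_add_le_max ((a : K) * m) (b * p)
  rw [hab', norm_one, norm_mul, norm_mul] at hmax
  have ha := IsUltrametricDist.norm_intCast_le_one K a
  have hb := IsUltrametricDist.norm_intCast_le_one K b
  rcases le_max_iff.1 hmax with h | h
  · nlinarith [norm_nonneg (a : K), norm_nonneg (m : K)]
  · nlinarith [norm_nonneg (b : K), norm_nonneg (p : K)]

variable (hpK : ‖(p : K)‖ = (p : ℝ)⁻¹)
include hpK

omit [IsUltrametricDist K] in
theorem norm_natCast_prime_lt_one : ‖(p : K)‖ < 1 := by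
  rw [hpK]
  exact inv_lt_one_of_one_lt₀ (by exact_mod_cast hp.out.one_lt)

theorem inv_le_norm_natCast {N : ℕ} (hN : N ≠ 0) : (N : ℝ)⁻¹ ≤ ‖(N : K)‖ := by
  have hnorm : ‖(N : K)‖ = ((p ^ N.factorization p : ℕ) : ℝ)⁻¹ := by
    conv_lhs => rw [← Nat.ordProj_mul_ordCompl_eq_self N p]
    rw [Nat.cast_mul, norm_mul, norm_natCast_eq_one_of_not_dvd (norm_natCast_prime_lt_one hpK)
      (Nat.not_dvd_ordCompl hp.out hN), mul_one, Nat.cast_pow, norm_pow, hpK, Nat.cast_pow,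
      inv_pow]
  rw [hnorm]
  exact inv_anti₀ (by exact_mod_cast Nat.pos_of_ne_zero (pow_ne_zero _ hp.out.ne_zero))
    (by exact_mod_cast Nat.ordProj_le p hN)

theorem inv_le_norm_natCast_of_prime {q : ℕ} (hq : q.Prime) : (p : ℝ)⁻¹ ≤ ‖(q : K)‖ := by
  by_cases hqp : p ∣ q
  · rw [← (Nat.prime_dvd_prime_iff_eq hp.out hq).1 hqp, hpK]
  · rw [norm_natCast_eq_one_of_not_dvd (norm_natCast_prime_lt_one hpK) hqp]
    exact inv_le_one_of_one_le₀ (by exact_mod_cast hp.out.one_le)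

theorem inv_le_norm_sub_one_of_isOfFinOrder {η : K} (hη : IsOfFinOrder η) (hη1 : η ≠ 1) :
    (p : ℝ)⁻¹ ≤ ‖η - 1‖ := by
  set d := orderOf η
  have hd : 0 < d := hη.orderOf_pos
  have hq : d.minFac.Prime := Nat.minFac_prime (mt orderOf_eq_one_iff.1 hη1)
  have hdq : 0 < d / d.minFac := Nat.div_pos (Nat.minFac_le hd) hq.pos
  have hpow : (η ^ (d / d.minFac)) ^ d.minFac = 1 := by
    rw [← pow_mul, Nat.div_mul_cancel (Nat.minFac_dvd d), pow_orderOf_eq_one]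
  have hpow1 : η ^ (d / d.minFac) ≠ 1 :=
    pow_ne_one_of_lt_orderOf hdq.ne' (Nat.div_lt_self hd hq.one_lt)
  calc (p : ℝ)⁻¹ ≤ ‖(d.minFac : K)‖ := inv_le_norm_natCast_of_prime hpK hq
    _ ≤ ‖η ^ (d / d.minFac) - 1‖ := norm_natCast_le_norm_sub_one hpow hpow1
    _ ≤ ‖η - 1‖ := norm_pow_sub_one_le_norm_sub_one hη.norm_eq_one.le _

theorem inv_le_norm_sub_of_isOfFinOrder {ζ ζ' : K} (hζ : IsOfFinOrder ζ) (hζ' : IsOfFinOrder ζ')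
    (hne : ζ ≠ ζ') : (p : ℝ)⁻¹ ≤ ‖ζ - ζ'‖ := by
  have hζ'0 : ζ' ≠ 0 := norm_ne_zero_iff.1 (by rw [hζ'.norm_eq_one]; exact one_ne_zero)
  have hdiv : ζ - ζ' = (ζ / ζ' - 1) * ζ' := by field_simp
  rw [hdiv, norm_mul, hζ'.norm_eq_one, mul_one]
  exact inv_le_norm_sub_one_of_isOfFinOrder hpK (isOfFinOrder_div hζ hζ')
    (fun h => hne ((div_eq_one_iff_eq hζ'0).1 h))

theorem exists_pos_forall_le_norm_sub_of_isOfFinOrder (x : K) :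
    ∃ c > 0, ∀ ζ : K, IsOfFinOrder ζ → ζ ≠ x → c ≤ ‖x - ζ‖ := by
  simpa only [dist_eq_norm, Set.mem_ofPred_eq] using exists_pos_forall_le_dist_of_separated
    (S := {ζ : K | IsOfFinOrder ζ}) (inv_pos.2 (Nat.cast_pos.2 hp.out.pos))
    (fun ζ hζ ζ' hζ' hne => by
      rw [dist_eq_norm]
      exact inv_le_norm_sub_of_isOfFinOrder hpK hζ hζ' hne) x

end Ultrametric

section Roots

variable {K : Type*} [NormedField K] [IsUltrametricDist K]

theorem log_norm_eval_derivative_le_sum_log_norm_sub [DecidableEq K] {P : K[X]} (hP : P.Splits)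
    (hm : P.Monic) {r x : K} (hr : r ∈ P.roots) (hnear : ∀ s ∈ P.roots, ‖x - r‖ ≤ ‖x - s‖)
    (hd : P.derivative.eval r ≠ 0) :
    Real.log ‖P.derivative.eval r‖ ≤ ((P.roots.erase r).map fun s => Real.log ‖x - s‖).sum := by
  rw [hP.eval_root_derivative hm hr] at hd ⊢
  have hne : ∀ s ∈ P.roots.erase r, r - s ≠ 0 := fun s hs h0 =>
    hd (Multiset.prod_eq_zero (Multiset.mem_map.2 ⟨s, hs, h0⟩))
  have hnorm : ‖((P.roots.erase r).map (r - ·)).prod‖ =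
      (((P.roots.erase r).map (r - ·)).map (‖·‖)).prod :=
    map_multiset_prod (normHom : K →*₀ ℝ) _
  rw [hnorm, Multiset.map_map,
    Real.log_multiset_prod (by simpa using hne), Multiset.map_map]
  refine Multiset.sum_map_le_sum_map _ _ fun s hs =>
    Real.log_le_log (norm_pos_iff.2 (hne s hs)) ?_
  -- the root nearest to `x` is at least as close to every other root as `x` is
  calc ‖r - s‖ ≤ max ‖r - x‖ ‖x - s‖ := by
        simpa only [dist_eq_norm] using IsUltrametricDist.dist_triangle_max r x s
    _ = ‖x - s‖ := max_eq_right (norm_sub_rev r x ▸ hnear s (Multiset.mem_of_mem_erase hs))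

theorem sum_log_norm_sub_nthRoots_one_nonpos {x : K} (hx : ‖x‖ ≤ 1) (N : ℕ) :
    ((nthRoots N (1 : K)).map fun ζ => Real.log ‖x - ζ‖).sum ≤ 0 := by
  refine (Multiset.sum_map_le_sum_map _ (fun _ => 0) fun ζ hζ => ?_).trans (by simp)
  have hζ1 := (isOfFinOrder_of_mem_nthRoots_one hζ).norm_eq_one
  refine Real.log_nonpos (norm_nonneg _) ?_
  rw [sub_eq_add_neg]
  refine (IsUltrametricDist.norm_add_le_max x (-ζ)).trans ?_
  rw [norm_neg, hζ1]
  exact max_le hx le_rfl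

variable [IsAlgClosed K]

theorem sum_log_norm_sub_nthRoots_one_of_norm_ne_one {x : K} (hx : ‖x‖ ≠ 1) (N : ℕ) :
    ((nthRoots N (1 : K)).map fun ζ => Real.log ‖x - ζ‖).sum = N * Real.log (max ‖x‖ 1) := by
  have hterm : ∀ ζ ∈ nthRoots N (1 : K), Real.log ‖x - ζ‖ = Real.log (max ‖x‖ 1) := by
    intro ζ hζ
    have hζ1 : ‖-ζ‖ = 1 := by rw [norm_neg, (isOfFinOrder_of_mem_nthRoots_one hζ).norm_eq_one]
    rw [sub_eq_add_neg, IsUltrametricDist.norm_add_eq_max_of_norm_ne_norm (hζ1 ▸ hx), hζ1]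
  rw [Multiset.map_congr rfl hterm, Multiset.map_const', Multiset.sum_replicate,
    IsAlgClosed.card_nthRoots, nsmul_eq_mul]

theorem log_add_log_norm_natCast_le_sum_log_norm_sub_nthRoots_one {N : ℕ} (hN : (N : K) ≠ 0)
    {x : K} {c : ℝ} (hc0 : 0 < c) (hc1 : c ≤ 1)
    (hc : ∀ ζ ∈ nthRoots N (1 : K), ζ ≠ x → c ≤ ‖x - ζ‖) :
    Real.log c + Real.log ‖(N : K)‖ ≤
      ((nthRoots N (1 : K)).map fun ζ => Real.log ‖x - ζ‖).sum := by
  classical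
  have hN0 : 0 < N := Nat.pos_of_ne_zero (by rintro rfl; simp at hN)
  obtain ⟨r, hr, hnear⟩ := Multiset.exists_min_image (fun ζ => ‖x - ζ‖)
    (s := nthRoots N (1 : K)) (Multiset.card_pos.1 (by rwa [IsAlgClosed.card_nthRoots]))
  have hr1 := (isOfFinOrder_of_mem_nthRoots_one hr).norm_eq_one
  have hderiv : ‖(X ^ N - C 1 : K[X]).derivative.eval r‖ = ‖(N : K)‖ := by
    simp [derivative_X_pow, hr1]
  rw [← Multiset.cons_erase hr, Multiset.map_cons, Multiset.sum_cons]
  gcongr ?_ + ?_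
  · rcases eq_or_ne r x with rfl | hrx
    · -- `Real.log 0 = 0`: the root `r = x` contributes nothing
      simpa using Real.log_nonpos hc0.le hc1
    · exact Real.log_le_log hc0 (hc r hr hrx)
  · rw [← hderiv]
    exact log_norm_eval_derivative_le_sum_log_norm_sub (IsAlgClosed.splits _)
      (monic_X_pow_sub_C 1 hN0.ne') hr hnear (norm_ne_zero_iff.1 (hderiv ▸ norm_ne_zero_iff.2 hN))

theorem exists_forall_sub_log_le_sum_log_norm_sub_nthRoots_one {p : ℕ} [Fact p.Prime]
    (hpK : ‖(p : K)‖ = (p : ℝ)⁻¹) (x : K) :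
    ∃ C : ℝ, ∀ N : ℕ, N ≠ 0 →
      C - Real.log N ≤ ((nthRoots N (1 : K)).map fun ζ => Real.log ‖x - ζ‖).sum := by
  obtain ⟨c, hc0, hc⟩ := exists_pos_forall_le_norm_sub_of_isOfFinOrder hpK x
  refine ⟨Real.log (min c 1), fun N hN => ?_⟩
  have hNK := inv_le_norm_natCast hpK hN
  have hN_inv : (0 : ℝ) < (N : ℝ)⁻¹ := by positivity
  calc Real.log (min c 1) - Real.log N = Real.log (min c 1) + Real.log (N : ℝ)⁻¹ := by
        rw [Real.log_inv, sub_eq_add_neg]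
    _ ≤ Real.log (min c 1) + Real.log ‖(N : K)‖ := by gcongr
    _ ≤ _ := log_add_log_norm_natCast_le_sum_log_norm_sub_nthRoots_one
        (norm_ne_zero_iff.1 (hN_inv.trans_le hNK).ne') (lt_min hc0 one_pos) (min_le_right _ _)
        fun ζ hζ hζx => (min_le_left _ _).trans (hc ζ (isOfFinOrder_of_mem_nthRoots_one hζ) hζx)

end Roots

theorem natCast_two_pow_sub_one (n : ℕ) : ((2 ^ n - 1 : ℕ) : ℝ) = 2 ^ n - 1 := by
  rw [Nat.cast_sub Nat.one_le_two_pow]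
  norm_num

theorem tendsto_natCast_two_pow_sub_one_div_two_pow :
    Tendsto (fun n : ℕ => ((2 ^ n - 1 : ℕ) : ℝ) / 2 ^ n) atTop (𝓝 1) := by
  have h := (tendsto_pow_atTop_nhds_zero_of_lt_one (by norm_num : (0 : ℝ) ≤ 1 / 2)
    (by norm_num)).const_sub 1
  rw [sub_zero] at h
  refine h.congr fun n => ?_
  rw [natCast_two_pow_sub_one, sub_div, div_self (by positivity), one_div_pow, one_div]

theorem tendsto_log_natCast_two_pow_sub_one_div_two_pow :
    Tendsto (fun n : ℕ => Real.log ((2 ^ n - 1 : ℕ) : ℝ) / 2 ^ n) atTop (𝓝 0) := by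
  have h := (tendsto_self_mul_const_pow_of_lt_one (by norm_num : (0 : ℝ) ≤ 1 / 2)
    (by norm_num)).const_mul (Real.log 2)
  rw [mul_zero] at h
  refine tendsto_of_tendsto_of_tendsto_of_le_of_le tendsto_const_nhds h
    (fun n => div_nonneg (Real.log_natCast_nonneg _) (by positivity)) fun n => ?_
  have hlog : Real.log ((2 ^ n - 1 : ℕ) : ℝ) ≤ n * Real.log 2 := by
    rcases Nat.eq_zero_or_pos (2 ^ n - 1) with h0 | hpos
    · rw [h0, Nat.cast_zero, Real.log_zero]
      positivity
    · rw [← Real.log_pow]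
      exact Real.log_le_log (by exact_mod_cast hpos) (by rw [natCast_two_pow_sub_one]; linarith)
  calc Real.log ((2 ^ n - 1 : ℕ) : ℝ) / 2 ^ n ≤ n * Real.log 2 / 2 ^ n := by gcongr
    _ = Real.log 2 * (n * (1 / 2) ^ n) := by rw [one_div_pow]; ring

theorem stmt19_general {p : ℕ} [Fact p.Prime]
    {K : Type*} [NormedField K] [IsUltrametricDist K]
    [IsAlgClosed K]
    (hpK : ‖(p : K)‖ = (p : ℝ)⁻¹) (x : K) :
    (‖x‖ > 1 →
      Filter.Tendsto
        (fun n : ℕ =>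
          (((Polynomial.X ^ (2 ^ n - 1) - 1 : Polynomial K).roots.map
              (fun ζ => Real.log ‖x - ζ‖)).sum) / 2 ^ n)
        Filter.atTop (nhds (Real.log ‖x‖))) ∧
    (‖x‖ < 1 →
      Filter.Tendsto
        (fun n : ℕ =>
          (((Polynomial.X ^ (2 ^ n - 1) - 1 : Polynomial K).roots.map
              (fun ζ => Real.log ‖x - ζ‖)).sum) / 2 ^ n)
        Filter.atTop (nhds 0)) ∧
    (‖x‖ = 1 → ¬(∃ m : ℕ, 0 < m ∧ ¬(p ∣ m) ∧ x ^ m = 1) →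
      Filter.Tendsto
        (fun n : ℕ =>
          (((Polynomial.X ^ (2 ^ n - 1) - 1 : Polynomial K).roots.map
              (fun ζ => Real.log ‖x - ζ‖)).sum) / 2 ^ n)
        Filter.atTop (nhds 0)) := by
  simp only [roots_X_pow_sub_one]
  refine ⟨fun hx => ?_, fun hx => ?_, fun hx _ => ?_⟩
  · simp only [sum_log_norm_sub_nthRoots_one_of_norm_ne_one hx.ne', max_eq_left hx.le,
      mul_div_right_comm]
    simpa using tendsto_natCast_two_pow_sub_one_div_two_pow.mul_const (Real.log ‖x‖)
  · simp only [sum_log_norm_sub_nthRoots_one_of_norm_ne_one hx.ne, max_eq_right hx.le,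
      Real.log_one, mul_zero, zero_div]
    exact tendsto_const_nhds
  · obtain ⟨C, hC⟩ := exists_forall_sub_log_le_sum_log_norm_sub_nthRoots_one hpK x
    have hlower : Tendsto (fun n : ℕ => (C - Real.log ((2 ^ n - 1 : ℕ) : ℝ)) / 2 ^ n)
        atTop (𝓝 0) := by
      have hC := (tendsto_pow_atTop_nhds_zero_of_lt_one (by norm_num : (0 : ℝ) ≤ 1 / 2)
        (by norm_num)).const_mul C
      simpa [sub_div, div_eq_mul_one_div C] using
        hC.sub tendsto_log_natCast_two_pow_sub_one_div_two_pow
    refine tendsto_of_tendsto_of_tendsto_of_le_of_le' hlower tendsto_const_nhds ?_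
      (Eventually.of_forall fun n => div_nonpos_of_nonpos_of_nonneg
        (sum_log_norm_sub_nthRoots_one_nonpos hx.le _) (by positivity))
    filter_upwards [eventually_ne_atTop 0] with n hn
    gcongr
    exact hC _ (Nat.sub_ne_zero_of_lt (Nat.one_lt_two_pow hn))

/-- let `p > 2` and, for each `n`, let `ζ` range over the roots
of unity of order dividing `2^n - 1` in `ℂ_p` (the roots of `X^{2^n-1} - 1`).
If `‖x‖ > 1` then `2^{-n} Σ_ζ log ‖x - ζ‖ → log ‖x‖`; if `‖x‖ < 1` the limit
is `0`; and if `‖x‖ = 1` and `x` is not a root of unity of order prime to `p`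
then the limit is also `0`. -/
theorem stmt19 {p : ℕ} [Fact p.Prime] (hp2 : 2 < p)
    {K : Type*} [NormedField K] [IsUltrametricDist K] [CompleteSpace K]
    [IsAlgClosed K] [CharZero K]
    (hpK : ‖(p : K)‖ = (p : ℝ)⁻¹) (x : K) :
    (‖x‖ > 1 →
      Filter.Tendsto
        (fun n : ℕ =>
          (((Polynomial.X ^ (2 ^ n - 1) - 1 : Polynomial K).roots.map
              (fun ζ => Real.log ‖x - ζ‖)).sum) / 2 ^ n)
        Filter.atTop (nhds (Real.log ‖x‖))) ∧
    (‖x‖ < 1 →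
      Filter.Tendsto
        (fun n : ℕ =>
          (((Polynomial.X ^ (2 ^ n - 1) - 1 : Polynomial K).roots.map
              (fun ζ => Real.log ‖x - ζ‖)).sum) / 2 ^ n)
        Filter.atTop (nhds 0)) ∧
    (‖x‖ = 1 → ¬(∃ m : ℕ, 0 < m ∧ ¬(p ∣ m) ∧ x ^ m = 1) →
      Filter.Tendsto
        (fun n : ℕ =>
          (((Polynomial.X ^ (2 ^ n - 1) - 1 : Polynomial K).roots.map
              (fun ζ => Real.log ‖x - ζ‖)).sum) / 2 ^ n)
        Filter.atTop (nhds 0)) :=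
  stmt19_general hpK x
end
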